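/- Let B ⊆ A be an extension of k-algebras with (A/B)^{⊗_B n} = 0 and A/B projective as a right B-module, and let X be a left A-module. Then there is an exact sequence of left A-modules 0 → A ⊗_B Y_{n-1} → … → A ⊗_B Y_1 → A ⊗_B Y_0 → X → 0, where Y_i = (A/B)^{⊗_B i} ⊗_B X. -/

import Mathlib

/- STATEMENT 16: Let `B ⊆ A` be an extension of `k`-algebras with `(A/B)^{⊗_B n} = 0` and
`A/B` projective as a right `B`-module, and let `X` be a left `A`-module.  Then there is an
exact sequence of left `A`-modules
`0 → A ⊗_B Y_{n-1} → ⋯ → A ⊗_B Y_1 → A ⊗_B Y_0 → X → 0`,  where `Y_i = (A/B)^{⊗_B i} ⊗_B X`.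

All tensor products over the (noncommutative) ring `B` are realised as quotients of tensor
products over `ℤ` by the `B`-balancing relations. -/

universe u v

open TensorProduct

noncomputable def Wrec (M : Type v) [AddCommGroup M] : ℕ → Σ (T : Type v), AddCommGroup T
  | 0 => ⟨M, inferInstance⟩
  | n+1 => let p := Wrec M n; letI := p.2; ⟨M ⊗[ℤ] p.1, inferInstance⟩

def Wpow (M : Type v) [AddCommGroup M] (n : ℕ) : Type v := (Wrec M n).1

noncomputable instance (M : Type v) [AddCommGroup M] (n : ℕ) : AddCommGroup (Wpow M n) :=
  (Wrec M n).2

noncomputable def Lact (B : Type*) [Ring B] (M : Type v) [AddCommGroup M] [Module B M] :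
    (n : ℕ) → B → Wpow M n →ₗ[ℤ] Wpow M n
  | 0 => fun b => (DistribSMul.toAddMonoidHom M b).toIntLinearMap
  | n+1 => fun b =>
      (LinearMap.rTensor (Wpow M n) ((DistribSMul.toAddMonoidHom M b).toIntLinearMap) :
        (M ⊗[ℤ] Wpow M n) →ₗ[ℤ] (M ⊗[ℤ] Wpow M n))

noncomputable def RelW (B : Type*) [Ring B] (M : Type v) [AddCommGroup M] [Module B M] [Module Bᵐᵒᵖ M] :
    (n : ℕ) → Submodule ℤ (Wpow M n)
  | 0 => ⊥
  | n+1 => Submodule.span ℤ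
      ({x : M ⊗[ℤ] Wpow M n | ∃ (b : B) (m : M) (w : Wpow M n),
          x = (MulOpposite.op b • m) ⊗ₜ[ℤ] w - m ⊗ₜ[ℤ] (Lact B M n b w)} ∪
       {x : M ⊗[ℤ] Wpow M n | ∃ (m : M) (w : Wpow M n), w ∈ RelW B M n ∧ x = m ⊗ₜ[ℤ] w})

/-- `TPowB B M n` : the `(n+1)`-fold tensor power of the `B`-bimodule `M` over `B`. -/
def TPowB (B : Type*) [Ring B] (M : Type v) [AddCommGroup M] [Module B M] [Module Bᵐᵒᵖ M]
    (n : ℕ) :=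
  Wpow M n ⧸ RelW B M n

section

variable (k : Type u) [CommRing k]
  (B : Type v) [Ring B] [Algebra k B] (A : Type v) [Ring A] [Algebra k A]
  (f : B →ₐ[k] A)
  [Module (B ⊗[k] Bᵐᵒᵖ) A]

/-- `A/B` as a `B`-bimodule. -/
def Abar := A ⧸ Submodule.span (B ⊗[k] Bᵐᵒᵖ) (Set.range ⇑f)

noncomputable instance : AddCommGroup (Abar k B A f) :=
  inferInstanceAs (AddCommGroup (A ⧸ Submodule.span (B ⊗[k] Bᵐᵒᵖ) (Set.range ⇑f)))

noncomputable instance : Module (B ⊗[k] Bᵐᵒᵖ) (Abar k B A f) :=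
  inferInstanceAs (Module (B ⊗[k] Bᵐᵒᵖ) (A ⧸ Submodule.span (B ⊗[k] Bᵐᵒᵖ) (Set.range ⇑f)))

noncomputable instance : Module B (Abar k B A f) :=
  Module.compHom (Abar k B A f)
    (Algebra.TensorProduct.includeLeft (R := k) (A := B) (B := Bᵐᵒᵖ) (S := k)).toRingHom

noncomputable instance : Module Bᵐᵒᵖ (Abar k B A f) :=
  Module.compHom (Abar k B A f)
    (Algebra.TensorProduct.includeRight (R := k) (A := B) (B := Bᵐᵒᵖ)).toRingHom

variable (X : Type v) [AddCommGroup X] [Module A X] [Module B X]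

/-- a bundled left `B`-module -/
structure PackB (B : Type v) [Ring B] where
  T : Type v
  [acg : AddCommGroup T]
  [mod : Module B T]

attribute [instance] PackB.acg PackB.mod

/-- `Yrec i` bundles `Y_i = (A/B)^{⊗_B i} ⊗_B X` as a left `B`-module. -/
noncomputable def Yrec : ℕ → PackB.{v} B
  | 0 => { T := X }
  | i+1 =>
      { T := ((Abar k B A f) ⊗[ℤ] (Yrec i).T) ⧸ Submodule.span B
          {z : (Abar k B A f) ⊗[ℤ] (Yrec i).T |
            ∃ (b : B) (m : Abar k B A f) (y : (Yrec i).T),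
              z = ((MulOpposite.op b) • m) ⊗ₜ[ℤ] y - m ⊗ₜ[ℤ] (b • y)} }

/-- `Yp i = (A/B)^{⊗_B i} ⊗_B X`. -/
def Yp (i : ℕ) : Type v := (Yrec k B A f X i).T

noncomputable instance (i : ℕ) : AddCommGroup (Yp k B A f X i) := (Yrec k B A f X i).acg
noncomputable instance (i : ℕ) : Module B (Yp k B A f X i) := (Yrec k B A f X i).mod

/-- `Ti i = A ⊗_B Y_i`, an induced left `A`-module. -/
def Ti (i : ℕ) :=
  (A ⊗[ℤ] Yp k B A f X i) ⧸ Submodule.span A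
    {z : A ⊗[ℤ] Yp k B A f X i | ∃ (a : A) (b : B) (y : Yp k B A f X i),
      z = (a * f b) ⊗ₜ[ℤ] y - a ⊗ₜ[ℤ] (b • y)}

noncomputable instance (i : ℕ) : AddCommGroup (Ti k B A f X i) :=
  inferInstanceAs (AddCommGroup
    ((A ⊗[ℤ] Yp k B A f X i) ⧸ Submodule.span A
      {z : A ⊗[ℤ] Yp k B A f X i | ∃ (a : A) (b : B) (y : Yp k B A f X i),
        z = (a * f b) ⊗ₜ[ℤ] y - a ⊗ₜ[ℤ] (b • y)}))

noncomputable instance (i : ℕ) : Module A (Ti k B A f X i) :=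
  inferInstanceAs (Module A
    ((A ⊗[ℤ] Yp k B A f X i) ⧸ Submodule.span A
      {z : A ⊗[ℤ] Yp k B A f X i | ∃ (a : A) (b : B) (y : Yp k B A f X i),
        z = (a * f b) ⊗ₜ[ℤ] y - a ⊗ₜ[ℤ] (b • y)}))

/-!
For a `B`-module `Y` whose `B`-action extends to an `A`-action, the augmentation
`ε : A ⊗_B Y → Y, a ⊗ y ↦ a • y` and the map `ι : A/B ⊗_B Y → A ⊗_B Y, ā ⊗ y ↦ a ⊗ y - 1 ⊗ a • y`
form a short exact sequence `0 → A/B ⊗_B Y → A ⊗_B Y → Y → 0`, split over `ℤ` by `y ↦ 1 ⊗ y` and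
`a ⊗ y ↦ ā ⊗ y`. The image of `ι` is the `A`-submodule `ker ε`, and pulling its `A`-action back
along `ι` gives `A/B ⊗_B Y` an `A`-action `a • (ā₂ ⊗ y) = (a a₂)‾ ⊗ y - ā ⊗ a₂ • y` extending its
`B`-action. Starting from `Y₀ = X` this iterates, and splicing the short exact sequences for
`Y₀, Y₁, …` gives the exact complex `⋯ → A ⊗_B Y₁ → A ⊗_B Y₀ → X → 0` with differentials `ι ∘ ε`
(the normalised relative bar resolution). Finally `Y_n` is the image of
`(A/B)^{⊗_ℤ n} ⊗_ℤ X` under a map that kills the relations defining `(A/B)^{⊗_B n} = 0`, so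
`Y_n = 0` and `ε` is injective on `A ⊗_B Y_{n-1}`, which truncates the complex.
-/

theorem Submodule.toAddSubgroup_span_le_of_smul_mem {R M : Type*} [Ring R] [AddCommGroup M]
    [Module R M] {S : Set M} (hS : ∀ (r : R), ∀ s ∈ S, r • s ∈ S) {H : AddSubgroup M}
    (hSH : S ⊆ H) : (Submodule.span R S).toAddSubgroup ≤ H := by
  intro x hx
  have hx' : x ∈ (Submodule.span R S).toAddSubmonoid := hx
  rw [Submodule.span_eq_closure] at hx'
  refine (AddSubmonoid.closure_le (S := H.toAddSubmonoid)).mpr ?_ hx'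
  rintro _ ⟨r, -, s, hs, rfl⟩
  exact hSH (hS r s hs)

noncomputable def Submodule.liftQAddHom {R M N : Type*} [Ring R] [AddCommGroup M] [Module R M]
    [AddCommGroup N] (p : Submodule R M) (g : M →+ N) (h : p.toAddSubgroup ≤ g.ker) :
    M ⧸ p →+ N :=
  QuotientAddGroup.lift p.toAddSubgroup g h

theorem AddMonoidHom.bilinear_zsmul_comm {M M' N : Type*} [AddCommGroup M] [AddCommGroup M']
    [AddCommGroup N] (g : M →+ M' →+ N) (r : ℤ) (m : M) (m' : M') :
    g (r • m) m' = g m (r • m') := by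
  rw [map_zsmul, map_zsmul, AddMonoidHom.zsmul_apply]

theorem Function.Exact.comp_surjective {M' M N P : Type*} [Zero P] {f : M → N} {g : N → P}
    {p : M' → M} (h : Function.Exact f g) (hp : Function.Surjective p) :
    Function.Exact (f ∘ p) g := fun y => by
  rw [h y, hp.range_comp]

theorem Wpow.induction_on {M : Type v} [AddCommGroup M] {j : ℕ} {P : Wpow M (j + 1) → Prop}
    (w : Wpow M (j + 1)) (zero : P 0)
    (tmul : ∀ (m : M) (w' : Wpow M j), P (m ⊗ₜ[ℤ] w' : M ⊗[ℤ] Wpow M j))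
    (add : ∀ w w', P w → P w' → P (w + w')) : P w := by
  have key (t : M ⊗[ℤ] Wpow M j) : P t := TensorProduct.induction_on t zero tmul add
  exact key w

noncomputable section

variable {k B A f X} {N : Type*} [AddCommGroup N]
variable (hbim : ∀ (b b' : B) (x : A), (b ⊗ₜ[k] (MulOpposite.op b')) • x = f b * x * f b')

namespace Abar

variable (f) in
def mk (a : A) : Abar k B A f :=
  Submodule.Quotient.mk (p := Submodule.span (B ⊗[k] Bᵐᵒᵖ) (Set.range ⇑f)) a

theorem mk_surjective : Function.Surjective (mk f) := Submodule.Quotient.mk_surjective _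

theorem mk_zero : mk f 0 = 0 := rfl

theorem mk_add (a a' : A) : mk f (a + a') = mk f a + mk f a' := rfl

theorem mk_f (b : B) : mk f (f b) = 0 :=
  (Submodule.Quotient.mk_eq_zero _).mpr (Submodule.subset_span ⟨b, rfl⟩)

theorem mk_one : mk f 1 = 0 := by
  rw [← map_one f, mk_f]

theorem smul_op_smul_comm (b b' : B) (m : Abar k B A f) :
    b • MulOpposite.op b' • m = MulOpposite.op b' • b • m := by
  show (b ⊗ₜ[k] (1 : Bᵐᵒᵖ)) • ((1 : B) ⊗ₜ[k] MulOpposite.op b') • m =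
    ((1 : B) ⊗ₜ[k] MulOpposite.op b') • (b ⊗ₜ[k] (1 : Bᵐᵒᵖ)) • m
  rw [← mul_smul, ← mul_smul, Algebra.TensorProduct.tmul_mul_tmul,
    Algebra.TensorProduct.tmul_mul_tmul, mul_one, one_mul, mul_one, one_mul]

section

include hbim

theorem smul_mk (b : B) (a : A) : b • mk f a = mk f (f b * a) := by
  show (b ⊗ₜ[k] (1 : Bᵐᵒᵖ)) •
      (Submodule.Quotient.mk a : A ⧸ Submodule.span (B ⊗[k] Bᵐᵒᵖ) (Set.range f)) =
    Submodule.Quotient.mk (f b * a)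
  rw [← Submodule.Quotient.mk_smul, ← MulOpposite.op_one, hbim, map_one, mul_one]

theorem op_smul_mk (b : B) (a : A) : MulOpposite.op b • mk f a = mk f (a * f b) := by
  show ((1 : B) ⊗ₜ[k] MulOpposite.op b) •
      (Submodule.Quotient.mk a : A ⧸ Submodule.span (B ⊗[k] Bᵐᵒᵖ) (Set.range f)) =
    Submodule.Quotient.mk (a * f b)
  rw [← Submodule.Quotient.mk_smul, hbim, map_one, one_mul]

theorem smul_f_mem_range (r : B ⊗[k] Bᵐᵒᵖ) (b : B) : r • f b ∈ Set.range f := by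
  induction r using TensorProduct.induction_on with
  | zero => exact ⟨0, by rw [map_zero]; exact (zero_smul (B ⊗[k] Bᵐᵒᵖ) (f b)).symm⟩
  | tmul b₁ b₂ => exact ⟨b₁ * b * b₂.unop, by rw [map_mul, map_mul, ← hbim, MulOpposite.op_unop]⟩
  | add r r' hr hr' =>
    obtain ⟨c, hc⟩ := hr
    obtain ⟨c', hc'⟩ := hr'
    exact ⟨c + c', by rw [add_smul, map_add, hc, hc']⟩

end

def lift (g : A →+ N) (hg : ∀ b, g (f b) = 0) : Abar k B A f →+ N :=
  Submodule.liftQAddHom _ g <| Submodule.toAddSubgroup_span_le_of_smul_mem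
    (by rintro r _ ⟨b, rfl⟩; exact smul_f_mem_range hbim r b) (by rintro _ ⟨b, rfl⟩; exact hg b)

end Abar

/- `Ind f M` and `BarTensor f M` are `A ⊗_B M` and `A/B ⊗_B M`, spelled exactly as in `Ti` and
`Yrec`: `Ti k B A f X i` is definitionally `Ind f (Yp k B A f X i)`, and `Yp k B A f X (i + 1)` is
definitionally `BarTensor f (Yp k B A f X i)`. -/

section

omit [Module (B ⊗[k] Bᵐᵒᵖ) A]

variable (f) (M : Type*) [AddCommGroup M] [Module B M]

def indRel : Submodule A (A ⊗[ℤ] M) :=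
  Submodule.span A {z | ∃ (a : A) (b : B) (y : M), z = (a * f b) ⊗ₜ[ℤ] y - a ⊗ₜ[ℤ] (b • y)}

def Ind := (A ⊗[ℤ] M) ⧸ indRel f M

instance : AddCommGroup (Ind f M) :=
  inferInstanceAs (AddCommGroup ((A ⊗[ℤ] M) ⧸ indRel f M))

instance : Module A (Ind f M) :=
  inferInstanceAs (Module A ((A ⊗[ℤ] M) ⧸ indRel f M))

structure CompatAction where
  act : A →+* AddMonoid.End M
  act_f : ∀ (b : B) (y : M), act (f b) y = b • y

variable {f M}

def CompatAction.ofModule [Module A M] (h : ∀ (b : B) (y : M), b • y = f b • y) :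
    CompatAction f M :=
  ⟨Module.toAddMonoidEnd A M, fun b y => (h b y).symm⟩

namespace Ind

def tmul (a : A) (y : M) : Ind f M :=
  Submodule.Quotient.mk (p := indRel f M) (a ⊗ₜ[ℤ] y)

theorem add_tmul (a a' : A) (y : M) : tmul (f := f) (a + a') y = tmul a y + tmul a' y := by
  rw [tmul, TensorProduct.add_tmul]; rfl

theorem tmul_add (a : A) (y y' : M) : tmul (f := f) a (y + y') = tmul a y + tmul a y' := by
  rw [tmul, TensorProduct.tmul_add]; rfl

theorem tmul_zero (a : A) : tmul (f := f) a (0 : M) = 0 := by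
  rw [tmul, TensorProduct.tmul_zero]; rfl

theorem mul_f_tmul (a : A) (b : B) (y : M) : tmul (f := f) (a * f b) y = tmul a (b • y) :=
  (Submodule.Quotient.eq _).mpr (Submodule.subset_span ⟨a, b, y, rfl⟩)

theorem smul_tmul (a' a : A) (y : M) : a' • tmul (f := f) a y = tmul (a' * a) y := by
  show a' • (Submodule.Quotient.mk (a ⊗ₜ[ℤ] y) : (A ⊗[ℤ] M) ⧸ indRel f M) =
    Submodule.Quotient.mk ((a' * a) ⊗ₜ[ℤ] y)
  rw [← Submodule.Quotient.mk_smul, TensorProduct.smul_tmul', smul_eq_mul]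

theorem induction_on {P : Ind f M → Prop} (t : Ind f M) (zero : P 0)
    (tmul : ∀ a y, P (tmul a y)) (add : ∀ t t', P t → P t' → P (t + t')) : P t := by
  obtain ⟨t, rfl⟩ := Submodule.Quotient.mk_surjective _ t
  induction t using TensorProduct.induction_on with
  | zero => exact zero
  | tmul a y => exact tmul a y
  | add t t' ht ht' => exact add _ _ ht ht'

def lift (φ : A → M → N)
    (add_left : ∀ a a' y, φ (a + a') y = φ a y + φ a' y)
    (add_right : ∀ a y y', φ a (y + y') = φ a y + φ a y')
    (balanced : ∀ a b y, φ (a * f b) y = φ a (b • y)) : Ind f M →+ N :=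
  let φ₂ : A →+ M →+ N := AddMonoidHom.mk' (fun a => AddMonoidHom.mk' (φ a) (add_right a))
    fun a a' => AddMonoidHom.ext (add_left a a')
  Submodule.liftQAddHom _ (TensorProduct.liftAddHom φ₂ (AddMonoidHom.bilinear_zsmul_comm _)) <|
    Submodule.toAddSubgroup_span_le_of_smul_mem
      (by
        rintro a' _ ⟨a, b, y, rfl⟩
        exact ⟨a' * a, b, y, by
          rw [smul_sub, TensorProduct.smul_tmul', TensorProduct.smul_tmul', smul_eq_mul,
            smul_eq_mul, mul_assoc]⟩)
      (by
        rintro _ ⟨a, b, y, rfl⟩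
        rw [SetLike.mem_coe, AddMonoidHom.mem_ker, map_sub]
        exact sub_eq_zero.mpr (balanced a b y))

theorem lift_tmul (φ : A → M → N) (add_left add_right balanced) (a : A) (y : M) :
    lift (f := f) φ add_left add_right balanced (tmul a y) = φ a y :=
  rfl

end Ind

namespace CompatAction

variable (ρ : CompatAction f M)

theorem act_add_apply (a a' : A) (y : M) : ρ.act (a + a') y = ρ.act a y + ρ.act a' y := by
  rw [map_add]; rfl

theorem act_mul_apply (a a' : A) (y : M) : ρ.act (a * a') y = ρ.act a (ρ.act a' y) := by
  rw [map_mul]; rfl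

theorem act_one_apply (y : M) : ρ.act 1 y = y := by
  rw [map_one]; rfl

theorem act_mul_f (a : A) (b : B) (y : M) : ρ.act (a * f b) y = ρ.act a (b • y) := by
  rw [act_mul_apply, ρ.act_f]

def augment : Ind f M →+ M :=
  Ind.lift (fun a y => ρ.act a y) ρ.act_add_apply (fun a _ _ => map_add (ρ.act a) _ _)
    ρ.act_mul_f

theorem augment_tmul (a : A) (y : M) : ρ.augment (Ind.tmul a y) = ρ.act a y :=
  Ind.lift_tmul _ _ _ _ a y

theorem augment_smul (a : A) (t : Ind f M) : ρ.augment (a • t) = ρ.act a (ρ.augment t) := by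
  induction t using Ind.induction_on with
  | zero => rw [smul_zero, map_zero, map_zero]
  | tmul a' y => rw [Ind.smul_tmul, augment_tmul, augment_tmul, act_mul_apply]
  | add t t' ht ht' => rw [smul_add, map_add, map_add, ht, ht', map_add]

theorem augment_surjective : Function.Surjective ρ.augment :=
  fun y => ⟨Ind.tmul 1 y, by rw [augment_tmul, act_one_apply]⟩

end CompatAction

variable (M) in
def Ind.augmentₗ [Module A M] (h : ∀ (b : B) (y : M), b • y = f b • y) : Ind f M →ₗ[A] M where
  toFun := (CompatAction.ofModule h).augment
  map_add' := map_add _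
  map_smul' := (CompatAction.ofModule h).augment_smul

end

variable (f) (M : Type*) [AddCommGroup M] [Module B M]

def barRel : Submodule B (Abar k B A f ⊗[ℤ] M) :=
  Submodule.span B {z | ∃ (b : B) (m : Abar k B A f) (y : M),
    z = (MulOpposite.op b • m) ⊗ₜ[ℤ] y - m ⊗ₜ[ℤ] (b • y)}

def BarTensor := (Abar k B A f ⊗[ℤ] M) ⧸ barRel f M

instance : AddCommGroup (BarTensor f M) :=
  inferInstanceAs (AddCommGroup ((Abar k B A f ⊗[ℤ] M) ⧸ barRel f M))

instance : Module B (BarTensor f M) :=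
  inferInstanceAs (Module B ((Abar k B A f ⊗[ℤ] M) ⧸ barRel f M))

variable {f M}

namespace BarTensor

def tmul (m : Abar k B A f) (y : M) : BarTensor f M :=
  Submodule.Quotient.mk (p := barRel f M) (m ⊗ₜ[ℤ] y)

theorem add_tmul (m m' : Abar k B A f) (y : M) : tmul (m + m') y = tmul m y + tmul m' y := by
  rw [tmul, TensorProduct.add_tmul]; rfl

theorem tmul_add (m : Abar k B A f) (y y' : M) : tmul m (y + y') = tmul m y + tmul m y' := by
  rw [tmul, TensorProduct.tmul_add]; rfl

theorem zero_tmul (y : M) : tmul (0 : Abar k B A f) y = 0 := by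
  rw [tmul, TensorProduct.zero_tmul]; rfl

theorem tmul_zero (m : Abar k B A f) : tmul m (0 : M) = 0 := by
  rw [tmul, TensorProduct.tmul_zero]; rfl

theorem op_smul_tmul (b : B) (m : Abar k B A f) (y : M) :
    tmul (MulOpposite.op b • m) y = tmul m (b • y) :=
  (Submodule.Quotient.eq _).mpr (Submodule.subset_span ⟨b, m, y, rfl⟩)

theorem smul_tmul (b : B) (m : Abar k B A f) (y : M) : b • tmul m y = tmul (b • m) y := by
  rw [tmul, tmul, ← TensorProduct.smul_tmul']; rfl

theorem induction_on {P : BarTensor f M → Prop} (z : BarTensor f M) (zero : P 0)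
    (tmul : ∀ a y, P (tmul (Abar.mk f a) y)) (add : ∀ z z', P z → P z' → P (z + z')) : P z := by
  obtain ⟨t, rfl⟩ := Submodule.Quotient.mk_surjective _ z
  induction t using TensorProduct.induction_on with
  | zero => exact zero
  | tmul m y =>
    obtain ⟨a, rfl⟩ := Abar.mk_surjective m
    exact tmul a y
  | add t t' ht ht' => exact add _ _ ht ht'

theorem addMonoidHom_ext {g g' : BarTensor f M →+ N}
    (h : ∀ a y, g (tmul (Abar.mk f a) y) = g' (tmul (Abar.mk f a) y)) : g = g' := by
  ext z
  induction z using induction_on with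
  | zero => rw [map_zero, map_zero]
  | tmul a y => exact h a y
  | add z z' hz hz' => rw [map_add, map_add, hz, hz']

theorem subsingleton [Subsingleton M] : Subsingleton (BarTensor f M) := by
  refine ⟨fun z z' => ?_⟩
  have h (z : BarTensor f M) : z = 0 := by
    induction z using induction_on with
    | zero => rfl
    | tmul a y => rw [Subsingleton.elim y 0, tmul_zero]
    | add z z' hz hz' => rw [hz, hz', add_zero]
  rw [h z, h z']

def lift (φ : A → M → N)
    (add_left : ∀ a a' y, φ (a + a') y = φ a y + φ a' y)
    (add_right : ∀ a y y', φ a (y + y') = φ a y + φ a y')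
    (apply_f : ∀ b y, φ (f b) y = 0) (balanced : ∀ a b y, φ (a * f b) y = φ a (b • y)) :
    BarTensor f M →+ N :=
  let φ₂ : A →+ M →+ N := AddMonoidHom.mk' (fun a => AddMonoidHom.mk' (φ a) (add_right a))
    fun a a' => AddMonoidHom.ext (add_left a a')
  let ψ : Abar k B A f ⊗[ℤ] M →+ N := TensorProduct.liftAddHom
    (Abar.lift hbim φ₂ fun b => AddMonoidHom.ext (apply_f b))
    (AddMonoidHom.bilinear_zsmul_comm _)
  Submodule.liftQAddHom _ ψ <| Submodule.toAddSubgroup_span_le_of_smul_mem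
    (by
      rintro b' _ ⟨b, m, y, rfl⟩
      exact ⟨b, b' • m, y, by
        rw [smul_sub, TensorProduct.smul_tmul', TensorProduct.smul_tmul',
          Abar.smul_op_smul_comm]⟩)
    (by
      rintro _ ⟨b, m, y, rfl⟩
      obtain ⟨a, rfl⟩ := Abar.mk_surjective m
      rw [SetLike.mem_coe, AddMonoidHom.mem_ker, map_sub, Abar.op_smul_mk hbim]
      exact sub_eq_zero.mpr (balanced a b y))

theorem lift_tmul (φ : A → M → N) (add_left add_right apply_f balanced) (a : A) (y : M) :
    lift hbim φ add_left add_right apply_f balanced (tmul (Abar.mk f a) y) = φ a y :=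
  rfl

end BarTensor

def Ind.toBarTensor : Ind f M →+ BarTensor f M :=
  Ind.lift (fun a y => BarTensor.tmul (Abar.mk f a) y)
    (fun _ _ _ => by rw [Abar.mk_add, BarTensor.add_tmul])
    (fun _ _ _ => BarTensor.tmul_add _ _ _)
    (fun a b y => by rw [← Abar.op_smul_mk hbim, BarTensor.op_smul_tmul])

theorem Ind.toBarTensor_tmul (a : A) (y : M) :
    Ind.toBarTensor hbim (Ind.tmul a y) = BarTensor.tmul (Abar.mk f a) y :=
  Ind.lift_tmul _ _ _ _ a y

namespace CompatAction

variable (ρ : CompatAction f M)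

def barToInd : BarTensor f M →+ Ind f M :=
  BarTensor.lift hbim (fun a y => Ind.tmul a y - Ind.tmul 1 (ρ.act a y))
    (fun a a' y => by rw [Ind.add_tmul, act_add_apply, Ind.tmul_add]; abel)
    (fun a y y' => by rw [Ind.tmul_add, map_add, Ind.tmul_add]; abel)
    (fun b y => by rw [ρ.act_f, ← Ind.mul_f_tmul, one_mul, sub_self])
    (fun a b y => by rw [Ind.mul_f_tmul, act_mul_f])

theorem barToInd_tmul (a : A) (y : M) :
    ρ.barToInd hbim (BarTensor.tmul (Abar.mk f a) y) = Ind.tmul a y - Ind.tmul 1 (ρ.act a y) :=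
  BarTensor.lift_tmul hbim _ _ _ _ _ a y

theorem augment_barToInd (z : BarTensor f M) : ρ.augment (ρ.barToInd hbim z) = 0 := by
  induction z using BarTensor.induction_on with
  | zero => rw [map_zero, map_zero]
  | tmul a y => rw [barToInd_tmul, map_sub, augment_tmul, augment_tmul, act_one_apply, sub_self]
  | add z z' hz hz' => rw [map_add, map_add, hz, hz', add_zero]

theorem toBarTensor_barToInd (z : BarTensor f M) :
    Ind.toBarTensor hbim (ρ.barToInd hbim z) = z := by
  induction z using BarTensor.induction_on with
  | zero => rw [map_zero, map_zero]
  | tmul a y =>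
    rw [barToInd_tmul, map_sub, Ind.toBarTensor_tmul, Ind.toBarTensor_tmul, Abar.mk_one,
      BarTensor.zero_tmul, sub_zero]
  | add z z' hz hz' => rw [map_add, map_add, hz, hz']

theorem barToInd_toBarTensor_add_tmul_augment (t : Ind f M) :
    ρ.barToInd hbim (Ind.toBarTensor hbim t) + Ind.tmul 1 (ρ.augment t) = t := by
  induction t using Ind.induction_on with
  | zero => rw [map_zero, map_zero, map_zero, Ind.tmul_zero, add_zero]
  | tmul a y => rw [Ind.toBarTensor_tmul, barToInd_tmul, augment_tmul, sub_add_cancel]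
  | add t t' ht ht' =>
    rw [map_add, map_add, map_add, Ind.tmul_add]
    nth_rw 3 [← ht, ← ht']
    abel

theorem barToInd_injective : Function.Injective (ρ.barToInd hbim) :=
  Function.LeftInverse.injective (ρ.toBarTensor_barToInd hbim)

theorem exact_barToInd_augment : Function.Exact (ρ.barToInd hbim) ρ.augment := by
  intro t
  refine ⟨fun ht => ⟨Ind.toBarTensor hbim t, ?_⟩, ?_⟩
  · simpa only [ht, Ind.tmul_zero, add_zero] using ρ.barToInd_toBarTensor_add_tmul_augment hbim t
  · rintro ⟨z, rfl⟩
    exact ρ.augment_barToInd hbim z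

include hbim in
theorem augment_injective (h : Subsingleton (BarTensor f M)) : Function.Injective ρ.augment := by
  refine (injective_iff_map_eq_zero _).mpr fun t ht => ?_
  obtain ⟨z, rfl⟩ := ((ρ.exact_barToInd_augment hbim) t).mp ht
  rw [h.elim z 0, map_zero]

def barTensorAct (a : A) : BarTensor f M →+ BarTensor f M :=
  BarTensor.lift hbim
    (fun a₂ y => BarTensor.tmul (Abar.mk f (a * a₂)) y - BarTensor.tmul (Abar.mk f a) (ρ.act a₂ y))
    (fun a₂ a₂' y => by
      rw [mul_add, Abar.mk_add, BarTensor.add_tmul, act_add_apply, BarTensor.tmul_add]; abel)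
    (fun a₂ y y' => by rw [BarTensor.tmul_add, map_add, BarTensor.tmul_add]; abel)
    (fun b y => by rw [← Abar.op_smul_mk hbim, BarTensor.op_smul_tmul, ρ.act_f, sub_self])
    (fun a₂ b y => by
      rw [← mul_assoc, ← Abar.op_smul_mk hbim, BarTensor.op_smul_tmul, act_mul_f])

theorem barTensorAct_tmul (a a₂ : A) (y : M) :
    ρ.barTensorAct hbim a (BarTensor.tmul (Abar.mk f a₂) y) =
      BarTensor.tmul (Abar.mk f (a * a₂)) y - BarTensor.tmul (Abar.mk f a) (ρ.act a₂ y) :=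
  BarTensor.lift_tmul hbim _ _ _ _ _ a₂ y

theorem barTensorAct_one : ρ.barTensorAct hbim 1 = AddMonoidHom.id _ :=
  BarTensor.addMonoidHom_ext fun a y => by
    rw [barTensorAct_tmul, one_mul, Abar.mk_one, BarTensor.zero_tmul, sub_zero]; rfl

theorem barTensorAct_mul (a a' : A) :
    ρ.barTensorAct hbim (a * a') = (ρ.barTensorAct hbim a).comp (ρ.barTensorAct hbim a') :=
  BarTensor.addMonoidHom_ext fun a₂ y => by
    rw [AddMonoidHom.comp_apply, barTensorAct_tmul, barTensorAct_tmul, map_sub, barTensorAct_tmul,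
      barTensorAct_tmul, act_mul_apply, mul_assoc]
    abel

theorem barTensorAct_zero : ρ.barTensorAct hbim 0 = 0 :=
  BarTensor.addMonoidHom_ext fun a y => by
    rw [barTensorAct_tmul, zero_mul, Abar.mk_zero, BarTensor.zero_tmul, BarTensor.zero_tmul,
      sub_zero]; rfl

theorem barTensorAct_add (a a' : A) :
    ρ.barTensorAct hbim (a + a') = ρ.barTensorAct hbim a + ρ.barTensorAct hbim a' :=
  BarTensor.addMonoidHom_ext fun a₂ y => by
    rw [AddMonoidHom.add_apply, barTensorAct_tmul, barTensorAct_tmul, barTensorAct_tmul, add_mul,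
      Abar.mk_add, Abar.mk_add, BarTensor.add_tmul, BarTensor.add_tmul]
    abel

def barTensor : CompatAction f (BarTensor f M) where
  act :=
    { toFun := ρ.barTensorAct hbim
      map_one' := ρ.barTensorAct_one hbim
      map_mul' := ρ.barTensorAct_mul hbim
      map_zero' := ρ.barTensorAct_zero hbim
      map_add' := ρ.barTensorAct_add hbim }
  act_f b z := by
    induction z using BarTensor.induction_on with
    | zero => rw [map_zero, smul_zero]
    | tmul a y =>
      show ρ.barTensorAct hbim (f b) _ = _
      rw [barTensorAct_tmul, Abar.mk_f, BarTensor.zero_tmul, sub_zero, BarTensor.smul_tmul,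
        Abar.smul_mk hbim]
    | add z z' hz hz' => rw [map_add, hz, hz', smul_add]

theorem barToInd_barTensor_act (a : A) (z : BarTensor f M) :
    ρ.barToInd hbim ((ρ.barTensor hbim).act a z) = a • ρ.barToInd hbim z := by
  induction z using BarTensor.induction_on with
  | zero => rw [map_zero, map_zero, smul_zero]
  | tmul a₂ y =>
    show ρ.barToInd hbim (ρ.barTensorAct hbim a _) = _
    rw [barTensorAct_tmul, map_sub, barToInd_tmul, barToInd_tmul, barToInd_tmul, act_mul_apply,
      smul_sub, Ind.smul_tmul, Ind.smul_tmul, mul_one]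
    abel
  | add z z' hz hz' => rw [map_add, map_add, hz, hz', map_add, smul_add]

def barDiff : Ind f (BarTensor f M) →ₗ[A] Ind f M where
  toFun t := ρ.barToInd hbim ((ρ.barTensor hbim).augment t)
  map_add' t t' := by rw [map_add, map_add]
  map_smul' a t := by rw [augment_smul, barToInd_barTensor_act]; rfl

theorem exact_barDiff_augment : Function.Exact (ρ.barDiff hbim) ρ.augment :=
  (ρ.exact_barToInd_augment hbim).comp_surjective (ρ.barTensor hbim).augment_surjective

theorem exact_barDiff : Function.Exact ((ρ.barTensor hbim).barDiff hbim) (ρ.barDiff hbim) :=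
  (((ρ.barTensor hbim).exact_barToInd_augment hbim).comp_surjective
    ((ρ.barTensor hbim).barTensor hbim).augment_surjective).comp_injective _
    (ρ.barToInd_injective hbim) (map_zero _)

theorem barDiff_injective (h : Subsingleton (BarTensor f (BarTensor f M))) :
    Function.Injective (ρ.barDiff hbim) :=
  (ρ.barToInd_injective hbim).comp ((ρ.barTensor hbim).augment_injective hbim h)

end CompatAction

def Yp.action (hBX : ∀ (b : B) (x : X), b • x = f b • x) :
    (i : ℕ) → CompatAction f (Yp k B A f X i)
  | 0 => (CompatAction.ofModule hBX : CompatAction f X)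
  | i + 1 => (Yp.action hBX i).barTensor hbim

section

omit [Module A X]

variable (k B A f X) in
def tpowTensorToYp : (j : ℕ) → Wpow (Abar k B A f) j ⊗[ℤ] X →ₗ[ℤ] Yp k B A f X (j + 1)
  | 0 => (barRel f X).mkQ.restrictScalars ℤ
  | j + 1 => (barRel f _).mkQ.restrictScalars ℤ ∘ₗ (tpowTensorToYp j).lTensor (Abar k B A f) ∘ₗ
      (TensorProduct.assoc ℤ (Abar k B A f) (Wpow (Abar k B A f) j) X).toLinearMap

theorem tpowTensorToYp_succ_tmul (j : ℕ) (m : Abar k B A f) (w : Wpow (Abar k B A f) j) (x : X) :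
    tpowTensorToYp k B A f X (j + 1) ((m ⊗ₜ[ℤ] w : Abar k B A f ⊗[ℤ] Wpow (Abar k B A f) j) ⊗ₜ x) =
      BarTensor.tmul m (tpowTensorToYp k B A f X j (w ⊗ₜ x)) :=
  rfl

theorem tpowTensorToYp_surjective (j : ℕ) : Function.Surjective (tpowTensorToYp k B A f X j) := by
  induction j with
  | zero => exact Submodule.mkQ_surjective (barRel f X)
  | succ j ih =>
    exact (Submodule.mkQ_surjective (barRel f (Yp k B A f X (j + 1)))).comp
      ((LinearMap.lTensor_surjective _ ih).comp (LinearEquiv.surjective _))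

theorem tpowTensorToYp_lact (j : ℕ) (b : B) (w : Wpow (Abar k B A f) j) (x : X) :
    tpowTensorToYp k B A f X j (Lact B (Abar k B A f) j b w ⊗ₜ x) =
      b • tpowTensorToYp k B A f X j (w ⊗ₜ x) := by
  cases j with
  | zero => exact (BarTensor.smul_tmul b w x).symm
  | succ j =>
    induction w using Wpow.induction_on with
    | zero => rw [map_zero, TensorProduct.zero_tmul, map_zero, smul_zero]
    | tmul m w => exact (BarTensor.smul_tmul b m _).symm
    | add w w' hw hw' =>
      rw [map_add, TensorProduct.add_tmul, map_add, hw, hw', TensorProduct.add_tmul, map_add,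
        smul_add]

theorem tpowTensorToYp_eq_zero_of_mem_relW {j : ℕ} {w : Wpow (Abar k B A f) j}
    (hw : w ∈ RelW B (Abar k B A f) j) (x : X) : tpowTensorToYp k B A f X j (w ⊗ₜ x) = 0 := by
  induction j with
  | zero =>
    rw [RelW, Submodule.mem_bot] at hw
    rw [hw, TensorProduct.zero_tmul, map_zero]
  | succ j ih =>
    rw [RelW] at hw
    induction hw using Submodule.span_induction with
    | mem w hw =>
      rcases hw with ⟨b, m, w', rfl⟩ | ⟨m, w', hw', rfl⟩
      · erw [TensorProduct.sub_tmul, map_sub]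
        rw [tpowTensorToYp_succ_tmul, tpowTensorToYp_succ_tmul, tpowTensorToYp_lact,
          BarTensor.op_smul_tmul]
        exact sub_self _
      · rw [tpowTensorToYp_succ_tmul, ih hw', BarTensor.tmul_zero]; rfl
    | zero => rw [TensorProduct.zero_tmul, map_zero]
    | add w w' _ _ hw hw' => rw [TensorProduct.add_tmul, map_add, hw, hw', add_zero]
    | smul n w _ hw => rw [← TensorProduct.smul_tmul', map_smul, hw, smul_zero]

theorem subsingleton_Yp_succ (m : ℕ) (hnil : Subsingleton (TPowB B (Abar k B A f) m)) :
    Subsingleton (Yp k B A f X (m + 1)) := by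
  have hrel : RelW B (Abar k B A f) m = ⊤ := Submodule.Quotient.subsingleton_iff.mp hnil
  have hzero : tpowTensorToYp k B A f X m = 0 := TensorProduct.ext' fun w x =>
    tpowTensorToYp_eq_zero_of_mem_relW (hrel ▸ Submodule.mem_top) x
  refine ⟨fun y y' => ?_⟩
  obtain ⟨t, rfl⟩ := tpowTensorToYp_surjective m y
  obtain ⟨t', rfl⟩ := tpowTensorToYp_surjective m y'
  rw [hzero, LinearMap.zero_apply, LinearMap.zero_apply]

theorem subsingleton_Yp_of_lt {m i : ℕ} (hnil : Subsingleton (TPowB B (Abar k B A f) m))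
    (hmi : m < i) : Subsingleton (Yp k B A f X i) := by
  induction i, hmi using Nat.le_induction with
  | base => exact subsingleton_Yp_succ m hnil
  | succ i _ ih => exact BarTensor.subsingleton (M := Yp k B A f X i)

end

end

theorem stmt16
    (hbim : ∀ (b b' : B) (x : A), (b ⊗ₜ[k] (MulOpposite.op b')) • x = f b * x * f b')
    (hBX : ∀ (b : B) (x : X), b • x = f b • x)
    (n : ℕ)
    -- `(A/B)^{⊗_B n} = 0`
    (hnil : Subsingleton (TPowB B (Abar k B A f) (n - 1))) :
    -- there is an exact sequence of left `A`-modules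
    -- `0 → A ⊗_B Y_{n-1} → ⋯ → A ⊗_B Y_0 → X → 0`
    ∃ (g : ∀ i : ℕ, Ti k B A f X (i+1) →ₗ[A] Ti k B A f X i)
      (g0 : Ti k B A f X 0 →ₗ[A] X),
      Function.Surjective ⇑g0 ∧
      Function.Exact ⇑(g 0) ⇑g0 ∧
      (∀ i : ℕ, i + 2 < n → Function.Exact ⇑(g (i+1)) ⇑(g i)) ∧
      (if n = 1 then Function.Injective ⇑g0 else Function.Injective ⇑(g (n-2))) := by
  let ρ := Yp.action hbim hBX
  refine ⟨fun i => (ρ i).barDiff hbim, Ind.augmentₗ X hBX, (ρ 0).augment_surjective,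
    (ρ 0).exact_barDiff_augment hbim, fun i _ => (ρ i).exact_barDiff hbim, ?_⟩
  split_ifs with hn
  · exact (ρ 0).augment_injective hbim (subsingleton_Yp_of_lt hnil (by omega : n - 1 < 1))
  · exact (ρ (n - 2)).barDiff_injective hbim
      (subsingleton_Yp_of_lt hnil (by omega : n - 1 < n - 2 + 2))

end
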